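/- Let g₊, g₊' be symmetric positive definite real p×p matrices and g₋, g₋' symmetric positive definite real q×q matrices, and form the pseudoriemannian Gram matrices g = diag(g₊, −g₋) and g' = diag(g₊', −g₋') of signature (p,q), block diagonal with respect to a fixed splitting ℝ^{p+q} = ℝ^p ⊕ ℝ^q. Then there exists a unique block-diagonal matrix P = diag(P₊, P₋), where P₊ is g₊-self-adjoint and g₊-positive definite and P₋ is g₋-self-adjoint and g₋-positive definite, such that g' = Pᵀ·g·P. (This is the pseudoriemannian case of the theorem on isomorphism of the two O(p,q)-reductions of the frame bundle: after reducing to the maximal compact subgroup O(p)×O(q), the tangent bundle splits and the polar decomposition argument applies blockwise.) -/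

import Mathlib

/-!
Let `R` be the positive definite square root of `g`. The substitution `T = R Q R⁻¹` turns
"`g Q` is positive definite" into "`T` is positive definite" and, once `g Q` is symmetric,
`Qᵀ g Q = g Q Q = R T² R`; so `Qᵀ g Q = g'` becomes `T² = R⁻¹ g' R⁻¹`, whose positive definite
solution exists and is unique. For block-diagonal `P`, the equation `g' = Pᵀ g P` splits into
the two blocks (the sign of the negative block cancels), and each block is such a problem.
-/

open Matrix

open scoped MatrixOrder ComplexOrder

theorem ExistsUnique.prodMk {α β : Type*} {p : α → Prop} {q : β → Prop}
    (hp : ∃! a, p a) (hq : ∃! b, q b) : ∃! x : α × β, p x.1 ∧ q x.2 := by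
  obtain ⟨a, ha, ha'⟩ := hp
  obtain ⟨b, hb, hb'⟩ := hq
  exact ⟨(a, b), ⟨ha, hb⟩, fun x hx => Prod.ext (ha' _ hx.1) (hb' _ hx.2)⟩

namespace Matrix

variable {n : Type*} [Fintype n]

theorem posDef_iff_transpose_eq_and_dotProduct_mulVec_pos {M : Matrix n n ℝ} :
    M.PosDef ↔ Mᵀ = M ∧ ∀ x : n → ℝ, x ≠ 0 → 0 < x ⬝ᵥ M *ᵥ x := by
  simp [posDef_iff_dotProduct_mulVec, IsHermitian, conjTranspose_eq_transpose_of_trivial]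

theorem posDef_mul_iff_of_transpose_eq {g Q : Matrix n n ℝ} (hg : gᵀ = g) :
    (g * Q).PosDef ↔ g * Q = Qᵀ * g ∧ ∀ x : n → ℝ, x ≠ 0 → 0 < x ⬝ᵥ (g * Q) *ᵥ x := by
  rw [posDef_iff_transpose_eq_and_dotProduct_mulVec_pos, transpose_mul, hg, eq_comm]

theorem fromBlocks_eq_transpose_mul_mul_iff {p q α : Type*} [Fintype p] [Fintype q]
    [CommSemiring α] {g g' A : Matrix p p α} {h h' B : Matrix q q α} :
    fromBlocks g' 0 0 h' = (fromBlocks A 0 0 B)ᵀ * fromBlocks g 0 0 h * fromBlocks A 0 0 B ↔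
      g' = Aᵀ * g * A ∧ h' = Bᵀ * h * B := by
  simp [fromBlocks_transpose, fromBlocks_multiply, fromBlocks_inj]

variable [DecidableEq n] {𝕜 : Type*} [RCLike 𝕜]

theorem PosDef.existsUnique_posDef_mul_self_eq {M : Matrix n n 𝕜} (hM : M.PosDef) :
    ∃! T : Matrix n n 𝕜, T.PosDef ∧ T * T = M :=
  ⟨CFC.sqrt M, ⟨hM.isStrictlyPositive.sqrt.posDef, CFC.sqrt_mul_sqrt_self M hM.posSemidef.nonneg⟩,
    fun _ hT => (CFC.sqrt_unique hT.2 hT.1.posSemidef.nonneg).symm⟩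

theorem PosDef.posDef_mul_self_mul_and_eq_iff {R Q g' : Matrix n n 𝕜} (hR : R.PosDef) :
    (R * R * Q).PosDef ∧ g' = Qᴴ * (R * R) * Q ↔
      (R * Q * R⁻¹).PosDef ∧ R * Q * R⁻¹ * (R * Q * R⁻¹) = R⁻¹ * g' * R⁻¹ := by
  have : Invertible R := hR.isUnit.invertible
  have hRstar : Rᴴ = R := hR.isHermitian
  set T := R * Q * R⁻¹ with hT
  have hPD : (R * R * Q).PosDef ↔ T.PosDef := by
    have hgQ : R * R * Q = star R * T * R := by
      simp [hT, star_eq_conjTranspose, hRstar, mul_assoc]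
    rw [hgQ, IsUnit.posDef_star_left_conjugate_iff hR.isUnit]
  rw [hPD]
  refine and_congr_right fun hTpos => ?_
  have hself : Qᴴ * (R * R) = R * R * Q := by
    simpa [conjTranspose_mul, hRstar, mul_assoc] using (hPD.2 hTpos).isHermitian.eq
  have hconj : Qᴴ * (R * R) * Q = R * (T * T) * R := by
    rw [hself]
    simp [hT, mul_assoc]
  rw [hconj]
  constructor
  · rintro rfl
    simp [mul_assoc]
  · rintro h
    rw [h]
    simp [mul_assoc]

theorem PosDef.existsUnique_posDef_mul_and_eq_conjTranspose_mul_mul {g g' : Matrix n n 𝕜}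
    (hg : g.PosDef) (hg' : g'.PosDef) :
    ∃! Q : Matrix n n 𝕜, (g * Q).PosDef ∧ g' = Qᴴ * g * Q := by
  obtain ⟨R, hR, rfl⟩ := hg.existsUnique_posDef_mul_self_eq.exists
  have : Invertible R := hR.isUnit.invertible
  have hRinv : R⁻¹ᴴ = R⁻¹ := by rw [conjTranspose_nonsing_inv, hR.isHermitian]
  have hconj : (R⁻¹ * g' * R⁻¹).PosDef := by
    simpa only [star_eq_conjTranspose, hRinv] using
      (IsUnit.posDef_star_left_conjugate_iff (isUnit_nonsing_inv_iff.2 hR.isUnit)).2 hg'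
  let conjR : Matrix n n 𝕜 ≃ Matrix n n 𝕜 :=
    { toFun Q := R * Q * R⁻¹
      invFun T := R⁻¹ * T * R
      left_inv Q := by simp [mul_assoc]
      right_inv T := by simp [mul_assoc] }
  exact (Equiv.existsUnique_congr (e := conjR) fun _ => hR.posDef_mul_self_mul_and_eq_iff).2
    hconj.existsUnique_posDef_mul_self_eq

end Matrix

/-- Pseudoriemannian case: for block-diagonal Gram matrices
`g = diag(g₊, −g₋)` and `g' = diag(g₊', −g₋')` of signature `(p,q)`, there is a
unique block-diagonal matrix `P = diag(P₊, P₋)` with `P₊` `g₊`-self-adjoint and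
`g₊`-positive definite, `P₋` `g₋`-self-adjoint and `g₋`-positive definite, such
that `g' = Pᵀ * g * P`. -/
theorem pseudoriemannian_metrics_related_by_unique_block_positive_factor
    (p q : ℕ)
    (gp gp' : Matrix (Fin p) (Fin p) ℝ) (gm gm' : Matrix (Fin q) (Fin q) ℝ)
    (hgp_symm : gpᵀ = gp)
    (hgp_pos : ∀ x : Fin p → ℝ, x ≠ 0 → 0 < x ⬝ᵥ gp.mulVec x)
    (hgp'_symm : gp'ᵀ = gp')
    (hgp'_pos : ∀ x : Fin p → ℝ, x ≠ 0 → 0 < x ⬝ᵥ gp'.mulVec x)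
    (hgm_symm : gmᵀ = gm)
    (hgm_pos : ∀ x : Fin q → ℝ, x ≠ 0 → 0 < x ⬝ᵥ gm.mulVec x)
    (hgm'_symm : gm'ᵀ = gm')
    (hgm'_pos : ∀ x : Fin q → ℝ, x ≠ 0 → 0 < x ⬝ᵥ gm'.mulVec x) :
    ∃! PQ : Matrix (Fin p) (Fin p) ℝ × Matrix (Fin q) (Fin q) ℝ,
      (gp * PQ.1 = (PQ.1)ᵀ * gp) ∧
      (∀ x : Fin p → ℝ, x ≠ 0 → 0 < x ⬝ᵥ (gp * PQ.1).mulVec x) ∧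
      (gm * PQ.2 = (PQ.2)ᵀ * gm) ∧
      (∀ x : Fin q → ℝ, x ≠ 0 → 0 < x ⬝ᵥ (gm * PQ.2).mulVec x) ∧
      Matrix.fromBlocks gp' 0 0 (-gm') =
        (Matrix.fromBlocks PQ.1 0 0 PQ.2)ᵀ *
          Matrix.fromBlocks gp 0 0 (-gm) *
          Matrix.fromBlocks PQ.1 0 0 PQ.2 := by
  have hgp := posDef_iff_transpose_eq_and_dotProduct_mulVec_pos.2 ⟨hgp_symm, hgp_pos⟩
  have hgp' := posDef_iff_transpose_eq_and_dotProduct_mulVec_pos.2 ⟨hgp'_symm, hgp'_pos⟩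
  have hgm := posDef_iff_transpose_eq_and_dotProduct_mulVec_pos.2 ⟨hgm_symm, hgm_pos⟩
  have hgm' := posDef_iff_transpose_eq_and_dotProduct_mulVec_pos.2 ⟨hgm'_symm, hgm'_pos⟩
  refine (existsUnique_congr fun PQ => ?_).2 <|
    (hgp.existsUnique_posDef_mul_and_eq_conjTranspose_mul_mul hgp').prodMk
      (hgm.existsUnique_posDef_mul_and_eq_conjTranspose_mul_mul hgm')
  rw [posDef_mul_iff_of_transpose_eq hgp_symm, posDef_mul_iff_of_transpose_eq hgm_symm,
    fromBlocks_eq_transpose_mul_mul_iff, conjTranspose_eq_transpose_of_trivial,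
    conjTranspose_eq_transpose_of_trivial]
  simp only [Matrix.mul_neg, Matrix.neg_mul, neg_inj]
  tauto
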